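/- (Main theorem, two-structure Boltzmann model.) Fix q ∈ (0,1) and C > 0, and set R = 0.001987 and T₀ = 310. Consider random structures A, B of length n whose 2n pairedness indicators are independent Bernoulli(q), and let p̂_{A,B}(p) = exp(−E(A|M(p))/(R·T₀)) / (exp(−E(A|M(p))/(R·T₀)) + exp(−E(B|M(p))/(R·T₀))) be the two-structure Boltzmann probability of A under the Nussinov–Jacobson energy with parameter C. Let P_n be the probability that there exists p ∈ [0,1] with |p − p̂_{A,B}(p)| ≥ 0.25. Then lim_{n→∞} P_n = 1. -/

import Mathlib

-- An RNA structure of length `n` is `A : Fin n → Bool`; `A i = true` means `i` is paired.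
/-- `bp A` = number of paired nucleotides of `A`. -/
def bp {n : ℕ} (A : Fin n → Bool) : ℕ :=
  (Finset.univ.filter fun i => A i = true).card

/-- `bpd A B` = number of positions paired in `A` but not in `B`. -/
def bpd {n : ℕ} (A B : Fin n → Bool) : ℕ :=
  (Finset.univ.filter fun i => A i = true ∧ B i = false).card

/-- `bps A B` = bp(A Δ B) = bp(A−B) + bp(B−A). -/
def bps {n : ℕ} (A B : Fin n → Bool) : ℕ := bpd A B + bpd B A

/-- The noiseless data sequence of a structure: 0 at paired positions, 1 at unpaired. -/
def dat {n : ℕ} (A : Fin n → Bool) : Fin n → ℝ := fun i => if A i then 0 else 1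

/-- Mixed data `M(p)` for structures `A`, `B`. -/
def mixd {n : ℕ} (A B : Fin n → Bool) (p : ℝ) : Fin n → ℝ :=
  fun i => p * dat A i + (1 - p) * dat B i

/-- Nussinov–Jacobson energy of structure `A` with parameter `C` and data `M`. -/
noncomputable def njE {n : ℕ} (C : ℝ) (A : Fin n → Bool) (M : Fin n → ℝ) : ℝ :=
  -(bp A : ℝ) + C * ∑ i, |(if A i then (0 : ℝ) else 1) - M i|

/-- Two-structure Boltzmann probability of `A` (vs. `B`) at mixing ratio `p`,
with `R = 0.001987` and `T₀ = 310`. -/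
noncomputable def phat {n : ℕ} (C : ℝ) (A B : Fin n → Bool) (p : ℝ) : ℝ :=
  Real.exp (-njE C A (mixd A B p) / (0.001987 * 310)) /
    (Real.exp (-njE C A (mixd A B p) / (0.001987 * 310)) +
      Real.exp (-njE C B (mixd A B p) / (0.001987 * 310)))

/-- Weight of a pair of structures under the product Bernoulli(q) model: each of the `2n`
pairedness indicators is independently `true` with probability `q`. -/
noncomputable def pairWeight (q : ℝ) (n : ℕ) (AB : (Fin n → Bool) × (Fin n → Bool)) : ℝ :=
  (∏ i, if AB.1 i then q else 1 - q) * (∏ i, if AB.2 i then q else 1 - q)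

open Classical in
/-- Probability of an event `P` on pairs of random structures of length `n` under the
product Bernoulli(q) model. -/
noncomputable def pairProb (q : ℝ) (n : ℕ)
    (P : (Fin n → Bool) × (Fin n → Bool) → Prop) : ℝ :=
  ∑ AB : (Fin n → Bool) × (Fin n → Bool), if P AB then pairWeight q n AB else 0

lemma bps_eq_card {n : ℕ} (A B : Fin n → Bool) :
    bps A B = (Finset.univ.filter fun i => A i ≠ B i).card := by
  classical
  rw [bps, bpd, bpd, Finset.card_filter, Finset.card_filter, Finset.card_filter,
    ← Finset.sum_add_distrib]
  apply Finset.sum_congr rfl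
  intro i _
  cases hA : A i <;> cases hB : B i <;> simp [hA, hB]

lemma sumAbs {n : ℕ} (A B : Fin n → Bool) :
    ∑ i, |dat A i - dat B i| = (bps A B : ℝ) := by
  classical
  rw [bps_eq_card, Finset.card_filter]
  push_cast
  apply Finset.sum_congr rfl
  intro i _
  cases hA : A i <;> cases hB : B i <;> simp [dat, hA, hB]

lemma sum_prod_bool {n : ℕ} (f : Fin n → Bool → ℝ) :
    ∑ g : Fin n → Bool, ∏ i, f i (g i) = ∏ i, (f i true + f i false) := by
  classical
  rw [← Fintype.prod_sum f]
  apply Finset.prod_congr rfl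
  intro i _
  simp


lemma njE_mixd_left {n : ℕ} (C : ℝ) (A B : Fin n → Bool) {p : ℝ} (h0 : 0 ≤ p) (h1 : p ≤ 1) :
    njE C A (mixd A B p) = -(bp A : ℝ) + C * ((1 - p) * (bps A B : ℝ)) := by
  have hsum : ∑ i, |(if A i then (0:ℝ) else 1) - mixd A B p i| = (1 - p) * (bps A B : ℝ) := by
    rw [← sumAbs A B, Finset.mul_sum]
    apply Finset.sum_congr rfl
    intro i _
    have hd : (if A i then (0:ℝ) else 1) = dat A i := rfl
    rw [hd, mixd]
    have : dat A i - (p * dat A i + (1 - p) * dat B i) = (1 - p) * (dat A i - dat B i) := by ring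
    rw [this, abs_mul, abs_of_nonneg (by linarith)]
  rw [njE, hsum]

lemma njE_mixd_right {n : ℕ} (C : ℝ) (A B : Fin n → Bool) {p : ℝ} (h0 : 0 ≤ p) (h1 : p ≤ 1) :
    njE C B (mixd A B p) = -(bp B : ℝ) + C * (p * (bps A B : ℝ)) := by
  have hsum : ∑ i, |(if B i then (0:ℝ) else 1) - mixd A B p i| = p * (bps A B : ℝ) := by
    rw [← sumAbs A B, Finset.mul_sum]
    apply Finset.sum_congr rfl
    intro i _
    have hd : (if B i then (0:ℝ) else 1) = dat B i := rfl
    rw [hd, mixd]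
    have : dat B i - (p * dat A i + (1 - p) * dat B i) = -(p * (dat A i - dat B i)) := by ring
    rw [this, abs_neg, abs_mul, abs_of_nonneg h0]
  rw [njE, hsum]

lemma exp_two_ge : (7 : ℝ) ≤ Real.exp 2 := by
  have h := Real.exp_one_gt_d9
  have h2 : Real.exp 2 = Real.exp 1 * Real.exp 1 := by
    rw [← Real.exp_add]; norm_num
  nlinarith [Real.exp_pos 1]

lemma key_det {n : ℕ} (C : ℝ) (A B : Fin n → Bool)
    (h5 : 5 ≤ C * (bps A B : ℝ)) :
    ∃ p ∈ Set.Icc (0:ℝ) 1, 0.25 ≤ |p - phat C A B p| := by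
  set d : ℝ := (bps A B : ℝ) with hd
  set RT : ℝ := 0.001987 * 310 with hRT
  have hRTpos : (0:ℝ) < RT := by norm_num [hRT]
  rcases le_total (bp A) (bp B) with hab | hab
  · -- use p = 3/8
    refine ⟨3/8, by norm_num, ?_⟩
    have EA := njE_mixd_left C A B (p := 3/8) (by norm_num) (by norm_num)
    have EB := njE_mixd_right C A B (p := 3/8) (by norm_num) (by norm_num)
    set x := Real.exp (-njE C A (mixd A B (3/8)) / RT) with hx
    set y := Real.exp (-njE C B (mixd A B (3/8)) / RT) with hy
    have hxpos : 0 < x := Real.exp_pos _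
    have hypos : 0 < y := Real.exp_pos _
    have hdiff : 2 ≤ (njE C A (mixd A B (3/8)) - njE C B (mixd A B (3/8))) / RT := by
      rw [EA, EB, le_div_iff₀ hRTpos]
      have hcast : (bp A : ℝ) ≤ (bp B : ℝ) := by exact_mod_cast hab
      nlinarith
    have hy7 : 7 * x ≤ y := by
      have : y = x * Real.exp ((njE C A (mixd A B (3/8)) - njE C B (mixd A B (3/8))) / RT) := by
        rw [hx, hy, ← Real.exp_add]
        congr 1
        field_simp
        ring
      rw [this]
      have h7 : (7:ℝ) ≤ Real.exp ((njE C A (mixd A B (3/8)) - njE C B (mixd A B (3/8))) / RT) :=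
        le_trans exp_two_ge (Real.exp_le_exp.mpr hdiff)
      nlinarith
    have hph : phat C A B (3/8) ≤ 1/8 := by
      rw [phat]
      have h8 : 8 * x ≤ x + y := by linarith
      calc x / (x + y) ≤ x / (8 * x) := by
            apply div_le_div_of_nonneg_left hxpos.le (by linarith) h8
        _ = 1/8 := by field_simp
    have hph0 : 0 ≤ phat C A B (3/8) := by
      rw [phat]; positivity
    calc (0.25:ℝ) ≤ 3/8 - phat C A B (3/8) := by linarith
      _ ≤ |3/8 - phat C A B (3/8)| := le_abs_self _
  · -- use p = 5/8
    refine ⟨5/8, by norm_num, ?_⟩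
    have EA := njE_mixd_left C A B (p := 5/8) (by norm_num) (by norm_num)
    have EB := njE_mixd_right C A B (p := 5/8) (by norm_num) (by norm_num)
    set x := Real.exp (-njE C A (mixd A B (5/8)) / RT) with hx
    set y := Real.exp (-njE C B (mixd A B (5/8)) / RT) with hy
    have hxpos : 0 < x := Real.exp_pos _
    have hypos : 0 < y := Real.exp_pos _
    have hdiff : 2 ≤ (njE C B (mixd A B (5/8)) - njE C A (mixd A B (5/8))) / RT := by
      rw [EA, EB, le_div_iff₀ hRTpos]
      have hcast : (bp B : ℝ) ≤ (bp A : ℝ) := by exact_mod_cast hab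
      nlinarith
    have hy7 : 7 * y ≤ x := by
      have : x = y * Real.exp ((njE C B (mixd A B (5/8)) - njE C A (mixd A B (5/8))) / RT) := by
        rw [hx, hy, ← Real.exp_add]
        congr 1
        field_simp
        ring
      rw [this]
      have h7 : (7:ℝ) ≤ Real.exp ((njE C B (mixd A B (5/8)) - njE C A (mixd A B (5/8))) / RT) :=
        le_trans exp_two_ge (Real.exp_le_exp.mpr hdiff)
      nlinarith
    have hph : 7/8 ≤ phat C A B (5/8) := by
      rw [phat]
      have h8 : x + y ≤ 8/7 * x := by linarith
      calc (7:ℝ)/8 = x / (8/7 * x) := by field_simp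
        _ ≤ x / (x + y) := by
            apply div_le_div_of_nonneg_left hxpos.le (by linarith) h8
    have hph1 : phat C A B (5/8) ≤ 1 := by
      rw [phat]
      rw [div_le_one (by positivity)]
      linarith
    calc (0.25:ℝ) ≤ -(5/8 - phat C A B (5/8)) := by linarith
      _ ≤ |5/8 - phat C A B (5/8)| := neg_le_abs _

section prob
variable {q : ℝ} {n : ℕ}

lemma pairWeight_nonneg (hq0 : 0 ≤ q) (hq1 : q ≤ 1) (AB : (Fin n → Bool) × (Fin n → Bool)) :
    0 ≤ pairWeight q n AB := by
  apply mul_nonneg <;>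
  · apply Finset.prod_nonneg
    intro i _
    split <;> linarith

lemma single_total : ∑ g : Fin n → Bool, ∏ i, (if g i then q else 1 - q) = 1 := by
  rw [sum_prod_bool (fun i a => if a then q else 1 - q)]
  simp

lemma pair_total : ∑ AB : (Fin n → Bool) × (Fin n → Bool), pairWeight q n AB = 1 := by
  rw [Fintype.sum_prod_type]
  simp only [pairWeight]
  have h1 := single_total (q := q) (n := n)
  calc ∑ A : Fin n → Bool, ∑ B : Fin n → Bool,
        (∏ i, if A i then q else 1 - q) * (∏ i, if B i then q else 1 - q)
      = ∑ A : Fin n → Bool, (∏ i, if A i then q else 1 - q) * 1 := by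
        apply Finset.sum_congr rfl
        intro A _
        rw [← Finset.mul_sum, h1]
    _ = 1 := by simp only [mul_one]; exact h1

open Classical in
lemma pairProb_compl (P : (Fin n → Bool) × (Fin n → Bool) → Prop) :
    pairProb q n P + pairProb q n (fun AB => ¬ P AB) = 1 := by
  rw [pairProb, pairProb, ← Finset.sum_add_distrib, ← pair_total (q := q) (n := n)]
  apply Finset.sum_congr rfl
  intro AB _
  by_cases h : P AB <;> simp [h]

open Classical in
lemma pairProb_mono (hq0 : 0 ≤ q) (hq1 : q ≤ 1)
    (P Q : (Fin n → Bool) × (Fin n → Bool) → Prop) (h : ∀ AB, P AB → Q AB) :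
    pairProb q n P ≤ pairProb q n Q := by
  apply Finset.sum_le_sum
  intro AB _
  by_cases hP : P AB
  · simp [hP, h AB hP]
  · simp only [hP, if_false]
    split
    · exact pairWeight_nonneg hq0 hq1 AB
    · exact le_rfl

lemma pairProb_nonneg (hq0 : 0 ≤ q) (hq1 : q ≤ 1)
    (P : (Fin n → Bool) × (Fin n → Bool) → Prop) : 0 ≤ pairProb q n P := by
  apply Finset.sum_nonneg
  intro AB _
  split
  · exact pairWeight_nonneg hq0 hq1 AB
  · exact le_refl 0

lemma pairProb_le_one (hq0 : 0 ≤ q) (hq1 : q ≤ 1)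
    (P : (Fin n → Bool) × (Fin n → Bool) → Prop) : pairProb q n P ≤ 1 := by
  have h := pairProb_compl (q := q) (n := n) P
  have := pairProb_nonneg hq0 hq1 (fun AB => ¬ P AB)
  linarith

lemma pairProb_congr (P Q : (Fin n → Bool) × (Fin n → Bool) → Prop)
    (h : ∀ AB, P AB ↔ Q AB) : pairProb q n P = pairProb q n Q := by
  classical
  apply Finset.sum_congr rfl
  intro AB _
  exact if_congr (h AB) rfl rfl

end prob

/-- shear equivalence (A,B) ↦ (A, A xor B) -/
def shear (n : ℕ) : ((Fin n → Bool) × (Fin n → Bool)) ≃ ((Fin n → Bool) × (Fin n → Bool)) where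
  toFun AB := (AB.1, fun i => xor (AB.1 i) (AB.2 i))
  invFun AB := (AB.1, fun i => xor (AB.1 i) (AB.2 i))
  left_inv := by
    intro ⟨A, B⟩
    refine Prod.ext rfl ?_
    funext i
    cases hA : A i <;> cases hB : B i <;> simp [hA, hB]
  right_inv := by
    intro ⟨A, B⟩
    refine Prod.ext rfl ?_
    funext i
    cases hA : A i <;> cases hB : B i <;> simp [hA, hB]

lemma bps_xor {n : ℕ} (A D : Fin n → Bool) :
    bps A (fun i => xor (A i) (D i)) = bp D := by
  rw [bps_eq_card, bp]
  congr 1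
  apply Finset.filter_congr
  intro i _
  cases hA : A i <;> cases hD : D i <;> simp [hA, hD]

lemma prod_ite_two {n : ℕ} (D : Fin n → Bool) :
    (∏ i, if D i then (2:ℝ) else 1) = 2 ^ bp D := by
  rw [Finset.prod_ite, Finset.prod_const, Finset.prod_const, one_pow, mul_one, bp]

open Classical in
lemma core_bound (q C : ℝ) (hq0 : 0 ≤ q) (hq1 : q ≤ 1) (hC : 0 < C) (n : ℕ) :
    pairProb q n (fun AB => C * (bps AB.1 AB.2 : ℝ) < 5) ≤
      2 ^ (⌈(5:ℝ)/C⌉₊) * (1 - q * (1 - q)) ^ n := by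
  classical
  set K := ⌈(5:ℝ)/C⌉₊ with hK
  rw [pairProb, ← Equiv.sum_comp (shear n)
    (fun AB => if C * (bps AB.1 AB.2 : ℝ) < 5 then pairWeight q n AB else 0)]
  have hshear : ∀ AD : (Fin n → Bool) × (Fin n → Bool),
      (fun AB => if C * (bps AB.1 AB.2 : ℝ) < 5 then pairWeight q n AB else 0) (shear n AD)
      = if C * (bp AD.2 : ℝ) < 5 then
          ∏ i, ((if AD.1 i then q else 1 - q) * (if xor (AD.1 i) (AD.2 i) then q else 1 - q))
        else 0 := by
    intro ⟨A, D⟩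
    simp only [shear, Equiv.coe_fn_mk, pairWeight, bps_xor A D]
    rw [Finset.prod_mul_distrib]
    split_ifs <;> rfl
  simp only [hshear]
  rw [Fintype.sum_prod_type, Finset.sum_comm]
  have inner : ∀ D : Fin n → Bool,
      (∑ A : Fin n → Bool, if C * (bp D : ℝ) < 5 then
          ∏ i, ((if A i then q else 1 - q) * (if xor (A i) (D i) then q else 1 - q))
        else 0)
      ≤ 2 ^ K * ∏ i, (if D i then q * (1 - q) else q^2 + (1-q)^2) := by
    intro D
    have hA : (∑ A : Fin n → Bool,
        ∏ i, ((if A i then q else 1 - q) * (if xor (A i) (D i) then q else 1 - q)))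
        = ∏ i, (if D i then 2 * (q * (1 - q)) else q^2 + (1-q)^2) := by
      rw [sum_prod_bool (fun i a => (if a then q else 1 - q) * (if xor a (D i) then q else 1 - q))]
      apply Finset.prod_congr rfl
      intro i _
      cases hD : D i <;> simp [hD] <;> ring
    have hsplit : (∏ i, (if D i then 2 * (q * (1 - q)) else q^2 + (1-q)^2))
        = 2 ^ bp D * ∏ i, (if D i then q * (1 - q) else q^2 + (1-q)^2) := by
      rw [← prod_ite_two D, ← Finset.prod_mul_distrib]
      apply Finset.prod_congr rfl
      intro i _
      cases hD : D i <;> simp [hD]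
    have hprod_nonneg : 0 ≤ ∏ i, (if D i then q * (1 - q) else q^2 + (1-q)^2) := by
      apply Finset.prod_nonneg
      intro i _
      split
      · nlinarith
      · positivity
    by_cases hc : C * (bp D : ℝ) < 5
    · simp only [hc, if_true]
      rw [hA, hsplit]
      apply mul_le_mul_of_nonneg_right _ hprod_nonneg
      apply pow_le_pow_right₀ (by norm_num : (1:ℝ) ≤ 2)
      have hlt : (bp D : ℝ) < 5 / C := by
        rw [lt_div_iff₀ hC]
        linarith
      exact le_of_lt (Nat.lt_ceil.mpr hlt)
    · simp only [hc, if_false]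
      rw [Finset.sum_const, Finset.card_univ]
      simp only [smul_zero]
      positivity
  calc (∑ D : Fin n → Bool, ∑ A : Fin n → Bool, if C * (bp D : ℝ) < 5 then
          ∏ i, ((if A i then q else 1 - q) * (if xor (A i) (D i) then q else 1 - q))
        else 0)
      ≤ ∑ D : Fin n → Bool, 2 ^ K * ∏ i, (if D i then q * (1 - q) else q^2 + (1-q)^2) :=
        Finset.sum_le_sum (fun D _ => inner D)
    _ = 2 ^ K * ∑ D : Fin n → Bool, ∏ i, (if D i then q * (1 - q) else q^2 + (1-q)^2) := by
        rw [Finset.mul_sum]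
    _ = 2 ^ K * (1 - q * (1 - q)) ^ n := by
        rw [sum_prod_bool (fun i a => if a then q * (1 - q) else q^2 + (1-q)^2)]
        congr 1
        rw [Finset.prod_congr rfl (fun i _ => by norm_num; ring :
          ∀ i ∈ Finset.univ, ((if true then q * (1 - q) else q^2 + (1-q)^2)
            + (if false then q * (1 - q) else q^2 + (1-q)^2)) = 1 - q * (1 - q)),
          Finset.prod_const, Finset.card_univ, Fintype.card_fin]

/-- Main theorem (two-structure Boltzmann model): fix `q ∈ (0,1)` and `C > 0`.  Let `P_n`
be the probability that a random pair of structures `A, B` of length `n` (all `2n`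
pairedness indicators independent Bernoulli(q)) admits some `p ∈ [0,1]` with total
variation distance `|p − p̂_{A,B}(p)| ≥ 0.25`.  Then `P_n → 1` as `n → ∞`. -/
theorem nj_cannot_reconstruct_ratios (q C : ℝ) (hq : q ∈ Set.Ioo (0 : ℝ) 1)
    (hC : 0 < C) :
    Filter.Tendsto
      (fun n : ℕ => pairProb q n (fun AB =>
        ∃ p ∈ Set.Icc (0 : ℝ) 1, 0.25 ≤ |p - phat C AB.1 AB.2 p|))
      Filter.atTop (nhds 1) := by
  obtain ⟨hq0, hq1⟩ := hq
  set K := ⌈(5:ℝ)/C⌉₊ with hK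
  set r : ℝ := 1 - q * (1 - q) with hr
  have hr0 : 0 ≤ r := by nlinarith
  have hr1 : r < 1 := by nlinarith
  have hlow : ∀ n : ℕ, 1 - 2 ^ K * r ^ n ≤ pairProb q n (fun AB =>
      ∃ p ∈ Set.Icc (0 : ℝ) 1, 0.25 ≤ |p - phat C AB.1 AB.2 p|) := by
    intro n
    have h1 : pairProb q n (fun AB => 5 ≤ C * (bps AB.1 AB.2 : ℝ)) ≤
        pairProb q n (fun AB => ∃ p ∈ Set.Icc (0 : ℝ) 1, 0.25 ≤ |p - phat C AB.1 AB.2 p|) :=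
      pairProb_mono hq0.le hq1.le _ _ (fun AB h => key_det C AB.1 AB.2 h)
    have h2 := pairProb_compl (q := q) (n := n) (fun AB => C * (bps AB.1 AB.2 : ℝ) < 5)
    have h3 : pairProb q n (fun AB => ¬ (C * (bps AB.1 AB.2 : ℝ) < 5)) =
        pairProb q n (fun AB => 5 ≤ C * (bps AB.1 AB.2 : ℝ)) :=
      pairProb_congr _ _ (fun AB => not_lt)
    have h4 := core_bound q C hq0.le hq1.le hC n
    rw [← hr, ← hK] at h4
    linarith
  have hhigh : ∀ n : ℕ, pairProb q n (fun AB =>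
      ∃ p ∈ Set.Icc (0 : ℝ) 1, 0.25 ≤ |p - phat C AB.1 AB.2 p|) ≤ 1 :=
    fun n => pairProb_le_one hq0.le hq1.le _
  apply tendsto_of_tendsto_of_tendsto_of_le_of_le _ tendsto_const_nhds hlow hhigh
  have h0 : Filter.Tendsto (fun n : ℕ => 2 ^ K * r ^ n) Filter.atTop (nhds 0) := by
    simpa using (tendsto_pow_atTop_nhds_zero_of_lt_one hr0 hr1).const_mul ((2:ℝ)^K)
  have h1 := (tendsto_const_nhds (x := (1:ℝ)) (f := Filter.atTop)).sub h0
  simpa using h1
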